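/- arXiv:math-ph/0402054 — 4 statements merged into one kernel-verified Lean document; each statement's English description precedes it below -/
import Mathlib

section
/- For all n × n matrices A, B, C with entries in 𝕄 and all vectors x ∈ 𝕄ⁿ, matrix action is consistent with composition, (A · B) · x = A · (B · x), and consequently matrix multiplication is associative: (A · B) · C = A · (B · C). -/
/-- The pseudo-complex algebra 𝕄 = ℝ² with multiplication (a,b)(c,d) = (ac−bd, ad−bc). -/
def Mmul (x y : ℝ × ℝ) : ℝ × ℝ := (x.1 * y.1 - x.2 * y.2, x.1 * y.2 - x.2 * y.1)

/-- e = (1,0). -/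
def Me : ℝ × ℝ := (1, 0)

/-- Conjugation x* := xe = (a, −b). -/
def Mconj (x : ℝ × ℝ) : ℝ × ℝ := Mmul x Me

/-- Matrix product over 𝕄: (A · B)_{ij} := Σ_k (a_{ik})* b_{kj}. -/
def MmatMul {n : ℕ} (A B : Matrix (Fin n) (Fin n) (ℝ × ℝ)) :
    Matrix (Fin n) (Fin n) (ℝ × ℝ) :=
  fun i j => ∑ k : Fin n, Mmul (Mconj (A i k)) (B k j)

/-- Action of an 𝕄-matrix on a vector: (A · x)_i := Σ_k (a_{ik})* x_k. -/
def MmatVec {n : ℕ} (A : Matrix (Fin n) (Fin n) (ℝ × ℝ)) (x : Fin n → ℝ × ℝ) :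
    Fin n → ℝ × ℝ :=
  fun i => ∑ k : Fin n, Mmul (Mconj (A i k)) (x k)

lemma Mmul_add (a x y : ℝ × ℝ) : Mmul a (x + y) = Mmul a x + Mmul a y := by
  simp [Mmul, Prod.ext_iff]; constructor <;> ring

lemma Madd_mul (x y a : ℝ × ℝ) : Mmul (x + y) a = Mmul x a + Mmul y a := by
  simp [Mmul, Prod.ext_iff]; constructor <;> ring

lemma Mconj_add (x y : ℝ × ℝ) : Mconj (x + y) = Mconj x + Mconj y := by
  simp [Mconj, Mmul, Me, Prod.ext_iff]; ring

lemma Mmul_sum_right {ι : Type*} (s : Finset ι) (a : ℝ × ℝ) (f : ι → ℝ × ℝ) :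
    Mmul a (∑ k ∈ s, f k) = ∑ k ∈ s, Mmul a (f k) := by
  induction s using Finset.cons_induction with
  | empty => simp [Mmul, Prod.ext_iff]
  | cons i s hi ih => rw [Finset.sum_cons, Finset.sum_cons, Mmul_add, ih]

lemma Mconj_sum {ι : Type*} (s : Finset ι) (f : ι → ℝ × ℝ) :
    Mconj (∑ k ∈ s, f k) = ∑ k ∈ s, Mconj (f k) := by
  induction s using Finset.cons_induction with
  | empty => simp [Mconj, Mmul, Me, Prod.ext_iff]
  | cons i s hi ih => rw [Finset.sum_cons, Finset.sum_cons, Mconj_add, ih]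

lemma Mmul_sum_left {ι : Type*} (s : Finset ι) (f : ι → ℝ × ℝ) (a : ℝ × ℝ) :
    Mmul (∑ k ∈ s, f k) a = ∑ k ∈ s, Mmul (f k) a := by
  induction s using Finset.cons_induction with
  | empty => simp [Mmul, Prod.ext_iff]
  | cons i s hi ih => rw [Finset.sum_cons, Finset.sum_cons, Madd_mul, ih]

lemma Mkey (a b x : ℝ × ℝ) :
    Mmul (Mconj (Mmul (Mconj a) b)) x = Mmul (Mconj a) (Mmul (Mconj b) x) := by
  simp [Mconj, Mmul, Me, Prod.ext_iff]; constructor <;> ring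

theorem MmatVec_comp {n : ℕ} (A B : Matrix (Fin n) (Fin n) (ℝ × ℝ)) (x : Fin n → ℝ × ℝ) :
    MmatVec (MmatMul A B) x = MmatVec A (MmatVec B x) := by
  funext i
  simp only [MmatVec, MmatMul, Mconj_sum, Mmul_sum_left, Mmul_sum_right, Mkey]
  exact Finset.sum_comm

/-- Matrix action is consistent with composition, (A·B)·x = A·(B·x), and consequently
matrix multiplication over 𝕄 is associative: (A·B)·C = A·(B·C). -/
theorem MmatMul_assoc {n : ℕ} (A B C : Matrix (Fin n) (Fin n) (ℝ × ℝ))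
    (x : Fin n → ℝ × ℝ) :
    MmatVec (MmatMul A B) x = MmatVec A (MmatVec B x) ∧
      MmatMul (MmatMul A B) C = MmatMul A (MmatMul B C) := by
  refine ⟨MmatVec_comp A B x, ?_⟩
  funext i j
  have := congrFun (MmatVec_comp A B (fun k => C k j)) i
  simpa [MmatVec, MmatMul] using this
end

section
/- Suppose the lifted current-charge density vector satisfies assumption (a1) at all points of the form T = tα with t > 0, i.e. Σ_{i=1}^{3} (∂F_i/∂X_i + ∂G_i/∂T_i)(X, tα) = 0 for all X ∈ ℝ³ and t > 0. Then the continuity equation holds: for all X ∈ ℝ³ and t > 0, Σ_{i=1}^{3} ∂j_i/∂X_i (X,t) = −∂ρ/∂t (X,t), i.e. ∇·j = −∂ρ/∂t. -/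
/-! Along the ray T = tα (t > 0, |α| = 1) the map T ↦ |T| has derivative ⟪α, ·⟫, so by the chain rule
∂F_i/∂X_i = ∂j_i/∂x_i and ∂G_i/∂T_i = α_i² ∂ρ/∂t there; since Σ α_i² = 1, assumption (a1) becomes
∇·j + ∂ρ/∂t = 0. -/

open scoped RealInnerProductSpace

section NormDeriv

variable {V : Type*} [NormedAddCommGroup V] [InnerProductSpace ℝ V]

theorem hasFDerivAt_norm {x : V} (hx : x ≠ 0) :
    HasFDerivAt (‖·‖) (‖x‖⁻¹ • innerSL ℝ x) x := by
  have hsq : ‖x‖ ^ 2 ≠ 0 := by positivity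
  have h := (hasStrictFDerivAt_norm_sq x).hasFDerivAt.sqrt hsq
  simp only [Real.sqrt_sq (norm_nonneg _)] at h
  refine h.congr_fderiv ?_
  ext y
  simp only [smul_apply, innerSL_apply_apply, smul_eq_mul, nsmul_eq_mul, Nat.cast_ofNat]
  field_simp

theorem hasFDerivAt_norm_smul_of_norm_eq_one {u : V} (hu : ‖u‖ = 1) {t : ℝ} (ht : 0 < t) :
    HasFDerivAt (‖·‖) (innerSL ℝ u) (t • u) := by
  have htu : ‖t • u‖ = t := by rw [norm_smul, hu, Real.norm_of_nonneg ht.le, mul_one]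
  refine (hasFDerivAt_norm (x := t • u) ?_).congr_fderiv ?_
  · rw [← norm_ne_zero_iff, htu]; exact ht.ne'
  · rw [htu, map_smul, smul_smul, inv_mul_cancel₀ ht.ne', one_smul]

end NormDeriv

section RadialLift

variable {E V W : Type*} [NormedAddCommGroup E] [NormedSpace ℝ E]
  [NormedAddCommGroup V] [InnerProductSpace ℝ V] [NormedAddCommGroup W] [NormedSpace ℝ W]
  {f : E × ℝ → W} {x : E} {u : V} {t : ℝ}

theorem hasFDerivAt_comp_norm_snd (hf : DifferentiableAt ℝ f (x, t)) (hu : ‖u‖ = 1)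
    (ht : 0 < t) :
    HasFDerivAt (fun p : E × V => f (p.1, ‖p.2‖))
      ((fderiv ℝ f (x, t)).comp
        ((ContinuousLinearMap.fst ℝ E V).prod ((innerSL ℝ u).comp (ContinuousLinearMap.snd ℝ E V))))
      (x, t • u) := by
  have htu : ‖t • u‖ = t := by rw [norm_smul, hu, Real.norm_of_nonneg ht.le, mul_one]
  refine HasFDerivAt.comp (x, t • u) ?_ (hasFDerivAt_fst.prodMk
    ((hasFDerivAt_norm_smul_of_norm_eq_one hu ht).comp (x, t • u) hasFDerivAt_snd))
  simpa [htu] using hf.hasFDerivAt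

theorem fderiv_comp_norm_snd_apply_fst (hf : DifferentiableAt ℝ f (x, t)) (hu : ‖u‖ = 1)
    (ht : 0 < t) (v : E) :
    fderiv ℝ (fun p : E × V => f (p.1, ‖p.2‖)) (x, t • u) (v, 0) = fderiv ℝ f (x, t) (v, 0) := by
  simp [(hasFDerivAt_comp_norm_snd hf hu ht).fderiv]

theorem fderiv_comp_norm_snd_apply_snd (hf : DifferentiableAt ℝ f (x, t)) (hu : ‖u‖ = 1)
    (ht : 0 < t) (w : V) :
    fderiv ℝ (fun p : E × V => f (p.1, ‖p.2‖)) (x, t • u) (0, w) =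
      ⟪u, w⟫ • fderiv ℝ f (x, t) (0, 1) := by
  rw [(hasFDerivAt_comp_norm_snd hf hu ht).fderiv, ← map_smul]
  simp

end RadialLift

open EuclideanSpace in
/-- If the lifted current-charge density vector, with F_i(X,T) = j_i(X,|T|) and
G_i(X,T) = α_i ρ(X,|T|), satisfies assumption (a1)
Σᵢ (∂F_i/∂X_i + ∂G_i/∂T_i) = 0 at all points with T = tα, t > 0, then the
continuity equation ∇·j = −∂ρ/∂t holds. -/
theorem continuity_equation
    (α : EuclideanSpace ℝ (Fin 3)) (hα : ∑ i, α i ^ 2 = 1)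
    (j : Fin 3 → EuclideanSpace ℝ (Fin 3) × ℝ → ℝ)
    (ρ : EuclideanSpace ℝ (Fin 3) × ℝ → ℝ)
    (hj : ∀ i, ContDiff ℝ 1 (j i)) (hρ : ContDiff ℝ 1 ρ)
    (F G : Fin 3 → EuclideanSpace ℝ (Fin 3) × EuclideanSpace ℝ (Fin 3) → ℝ)
    (hF : ∀ i p, F i p = j i (p.1, ‖p.2‖))
    (hG : ∀ i p, G i p = α i * ρ (p.1, ‖p.2‖))
    (a1 : ∀ (X : EuclideanSpace ℝ (Fin 3)) (t : ℝ), 0 < t →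
      ∑ i, (fderiv ℝ (F i) (X, t • α) (single i 1, 0) +
            fderiv ℝ (G i) (X, t • α) (0, single i 1)) = 0) :
    ∀ (X : EuclideanSpace ℝ (Fin 3)) (t : ℝ), 0 < t →
      ∑ i, fderiv ℝ (j i) (X, t) (single i 1, 0) = -fderiv ℝ ρ (X, t) (0, 1) := by
  intro X t ht
  have hα_norm : ‖α‖ = 1 := by simp [EuclideanSpace.norm_eq, hα]
  have hρ_diff : DifferentiableAt ℝ ρ (X, t) := hρ.differentiable one_ne_zero _
  have hterm (i : Fin 3) :
      fderiv ℝ (F i) (X, t • α) (single i 1, 0) + fderiv ℝ (G i) (X, t • α) (0, single i 1) =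
        fderiv ℝ (j i) (X, t) (single i 1, 0) + α i ^ 2 * fderiv ℝ ρ (X, t) (0, 1) := by
    rw [funext (hF i), funext (hG i),
      fderiv_comp_norm_snd_apply_fst ((hj i).differentiable one_ne_zero _) hα_norm ht,
      fderiv_comp_norm_snd_apply_snd (hρ_diff.const_mul (α i)) hα_norm ht, fderiv_const_mul hρ_diff,
      inner_single_right]
    simp only [smul_apply, smul_eq_mul, one_mul, conj_trivial]
    ring
  have hsum := a1 X t ht
  rw [Finset.sum_congr rfl fun i _ => hterm i, Finset.sum_add_distrib, ← Finset.sum_mul, hα,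
    one_mul] at hsum
  linarith
end

section
/- Suppose that for a fixed unit vector α = (α_x,α_y,α_z) ∈ ℝ³ the lifted electromagnetic field tensor 𝓕 (with entries T₁₂, T₁₃, T₂₃, S₁₂, S₁₃, S₂₃ as in the context) satisfies assumption (a3): (∂T₁₂/∂z − ∂S₁₂/∂T₃) − (∂T₁₃/∂y − ∂S₁₃/∂T₂) + (∂T₂₃/∂x − ∂S₂₃/∂T₁) = 0 at all points with T = tα, t > 0. Then the divergence Maxwell equation ∇·B = 0 holds: ∂B_x/∂x + ∂B_y/∂y + ∂B_z/∂z = 0 for all X ∈ ℝ³ and t > 0. -/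
/-! At `T = tα` with `t > 0` the gradient of `‖T‖` is `α`, so differentiating a lifted function
`f (X, ‖T‖)` in the direction `(v, 0)` gives the spatial derivative of `f`, and in the direction
`(0, e_k)` gives `α_k ∂f/∂t`. Hence the `T`-terms of (a3) are `∂B_z/∂z + ∂B_y/∂y + ∂B_x/∂x`, while
its `S`-terms add up to
`α_z (α_x Ė_y - α_y Ė_x) - α_y (α_x Ė_z - α_z Ė_x) + α_x (α_y Ė_z - α_z Ė_y) = 0`. -/

open scoped InnerProductSpace

section

variable {E F G : Type*} [NormedAddCommGroup E] [NormedSpace ℝ E]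
  [NormedAddCommGroup F] [InnerProductSpace ℝ F] [NormedAddCommGroup G] [NormedSpace ℝ G]

theorem hasFDerivAt_norm_smul_of_norm_eq_one_s17 {α : F} (hα : ‖α‖ = 1) {t : ℝ} (ht : 0 < t) :
    HasFDerivAt (‖·‖) (innerSL ℝ α) (t • α) := by
  have htα : ‖t • α‖ = t := by rw [norm_smul, hα, Real.norm_of_nonneg ht.le, mul_one]
  have hsqrt := (hasStrictFDerivAt_norm_sq (t • α)).hasFDerivAt.sqrt (by rw [htα]; positivity)
  simp only [Real.sqrt_sq (norm_nonneg _), htα, Real.sqrt_sq ht.le] at hsqrt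
  refine hsqrt.congr_fderiv (ContinuousLinearMap.ext fun v => ?_)
  simp
  field_simp

theorem HasFDerivAt.comp_fst_norm_snd {f : E × ℝ → G} {f' : E × ℝ →L[ℝ] G} {X : E} {α : F}
    {t : ℝ} (hf : HasFDerivAt f f' (X, t)) (hα : ‖α‖ = 1) (ht : 0 < t) :
    HasFDerivAt (fun p : E × F => f (p.1, ‖p.2‖))
      (f'.comp ((ContinuousLinearMap.fst ℝ E F).prod
        ((innerSL ℝ α).comp (ContinuousLinearMap.snd ℝ E F)))) (X, t • α) := by
  have htα : ‖t • α‖ = t := by rw [norm_smul, hα, Real.norm_of_nonneg ht.le, mul_one]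
  have hlift : HasFDerivAt (fun p : E × F => (p.1, ‖p.2‖)) _ (X, t • α) :=
    hasFDerivAt_fst.prodMk
      ((hasFDerivAt_norm_smul_of_norm_eq_one_s17 hα ht).comp (X, t • α) hasFDerivAt_snd)
  have hf' : HasFDerivAt f f' (X, ‖t • α‖) := by rwa [htα]
  exact hf'.comp (X, t • α) hlift

theorem HasFDerivAt.fderiv_comp_fst_norm_snd_apply_inl {f : E × ℝ → G} {f' : E × ℝ →L[ℝ] G}
    {X : E} {α : F} {t : ℝ} (hf : HasFDerivAt f f' (X, t)) (hα : ‖α‖ = 1) (ht : 0 < t) (v : E) :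
    fderiv ℝ (fun p : E × F => f (p.1, ‖p.2‖)) (X, t • α) (v, 0) = f' (v, 0) := by
  simp [(hf.comp_fst_norm_snd hα ht).fderiv]

theorem HasFDerivAt.fderiv_comp_fst_norm_snd_apply_inr {f : E × ℝ → G} {f' : E × ℝ →L[ℝ] G}
    {X : E} {α : F} {t : ℝ} (hf : HasFDerivAt f f' (X, t)) (hα : ‖α‖ = 1) (ht : 0 < t) (w : F) :
    fderiv ℝ (fun p : E × F => f (p.1, ‖p.2‖)) (X, t • α) (0, w) = ⟪α, w⟫_ℝ • f' (0, 1) := by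
  rw [(hf.comp_fst_norm_snd hα ht).fderiv, ← map_smul]
  simp

end

open EuclideanSpace in
/-- If the lifted electromagnetic field tensor, with entries T₁₂ = B_z, T₁₃ = −B_y,
T₂₃ = B_x, S₁₂ = α_x E_y − α_y E_x, S₁₃ = α_x E_z − α_z E_x, S₂₃ = α_y E_z − α_z E_y
(lifted via t = |T|), satisfies assumption (a3):
(∂T₁₂/∂z − ∂S₁₂/∂t_z) − (∂T₁₃/∂y − ∂S₁₃/∂t_y) + (∂T₂₃/∂x − ∂S₂₃/∂t_x) = 0
at all points with T = tα, t > 0, then the divergence Maxwell equation ∇·B = 0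
holds for all X and t > 0. -/
theorem div_B_eq_zero
    (α : EuclideanSpace ℝ (Fin 3)) (hα : ‖α‖ = 1)
    (E B : Fin 3 → EuclideanSpace ℝ (Fin 3) × ℝ → ℝ)
    (hE : ∀ i, ContDiff ℝ 1 (E i)) (hB : ∀ i, ContDiff ℝ 1 (B i))
    (T12 T13 T23 S12 S13 S23 : EuclideanSpace ℝ (Fin 3) × EuclideanSpace ℝ (Fin 3) → ℝ)
    (hT12 : ∀ p, T12 p = B 2 (p.1, ‖p.2‖))
    (hT13 : ∀ p, T13 p = -B 1 (p.1, ‖p.2‖))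
    (hT23 : ∀ p, T23 p = B 0 (p.1, ‖p.2‖))
    (hS12 : ∀ p, S12 p = α 0 * E 1 (p.1, ‖p.2‖) - α 1 * E 0 (p.1, ‖p.2‖))
    (hS13 : ∀ p, S13 p = α 0 * E 2 (p.1, ‖p.2‖) - α 2 * E 0 (p.1, ‖p.2‖))
    (hS23 : ∀ p, S23 p = α 1 * E 2 (p.1, ‖p.2‖) - α 2 * E 1 (p.1, ‖p.2‖))
    (a3 : ∀ (X : EuclideanSpace ℝ (Fin 3)) (t : ℝ), 0 < t →
      (fderiv ℝ T12 (X, t • α) (single 2 1, 0) - fderiv ℝ S12 (X, t • α) (0, single 2 1)) -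
      (fderiv ℝ T13 (X, t • α) (single 1 1, 0) - fderiv ℝ S13 (X, t • α) (0, single 1 1)) +
      (fderiv ℝ T23 (X, t • α) (single 0 1, 0) - fderiv ℝ S23 (X, t • α) (0, single 0 1))
        = 0) :
    ∀ (X : EuclideanSpace ℝ (Fin 3)) (t : ℝ), 0 < t →
      fderiv ℝ (B 0) (X, t) (single 0 1, 0) + fderiv ℝ (B 1) (X, t) (single 1 1, 0) +
        fderiv ℝ (B 2) (X, t) (single 2 1, 0) = 0 := by
  intro X t ht
  have dB i : HasFDerivAt (B i) (fderiv ℝ (B i) (X, t)) (X, t) :=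
    ((hB i).differentiable one_ne_zero _).hasFDerivAt
  have dE i : HasFDerivAt (E i) (fderiv ℝ (E i) (X, t)) (X, t) :=
    ((hE i).differentiable one_ne_zero _).hasFDerivAt
  have dS i j k l := ((dE i).const_mul (α j)).fun_sub ((dE k).const_mul (α l))
  have h := a3 X t ht
  rw [funext hT12, funext hT13, funext hT23, funext hS12, funext hS13, funext hS23,
    (dB 2).fderiv_comp_fst_norm_snd_apply_inl hα ht,
    (dB 1).fun_neg.fderiv_comp_fst_norm_snd_apply_inl hα ht,
    (dB 0).fderiv_comp_fst_norm_snd_apply_inl hα ht,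
    (dS 1 0 0 1).fderiv_comp_fst_norm_snd_apply_inr hα ht,
    (dS 2 0 0 2).fderiv_comp_fst_norm_snd_apply_inr hα ht,
    (dS 2 1 1 2).fderiv_comp_fst_norm_snd_apply_inr hα ht] at h
  simp only [inner_single_right, Real.ringHom_apply, one_mul, sub_apply,
    smul_apply, smul_eq_mul, neg_apply] at h
  linear_combination h
end

section
/- Suppose that for every unit vector α = (α_x,α_y,α_z) ∈ ℝ³ the lifted electromagnetic field tensor 𝓕 (with entries T₁₂, T₁₃, T₂₃, S₁₂, S₁₃, S₂₃ as in the context) satisfies assumption (a4): (∂T₁₂/∂T₃ − ∂S₁₂/∂z) − (∂T₁₃/∂T₂ − ∂S₁₃/∂y) + (∂T₂₃/∂T₁ − ∂S₂₃/∂x) = 0 at all points with T = tα, t > 0. Then the curl Maxwell equation ∇ × E = −∂B/∂t holds: ∂E_z/∂y − ∂E_y/∂z = −∂B_x/∂t, ∂E_x/∂z − ∂E_z/∂x = −∂B_y/∂t, and ∂E_y/∂x − ∂E_x/∂y = −∂B_z/∂t, for all X ∈ ℝ³ and t > 0. -/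
/-! Since `t = ‖T‖` and the gradient of the norm at `T = tα` is `α`, the chain rule turns
`∂/∂T_k` of a lifted field into `α_k ∂/∂t`. Hence the left-hand side of (a4) at `T = tα` is
`⟪α, ∇ × E + ∂B/∂t⟫`, and taking for `α` the three coordinate vectors gives the three
components of `∇ × E = -∂B/∂t`. -/

local notation "E3" => EuclideanSpace ℝ (Fin 3)

section LiftThroughNorm

variable {E F G : Type*} [NormedAddCommGroup E] [NormedSpace ℝ E]
  [NormedAddCommGroup F] [InnerProductSpace ℝ F] [NormedAddCommGroup G] [NormedSpace ℝ G]

theorem hasStrictFDerivAt_norm {x : F} (hx : x ≠ 0) :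
    HasStrictFDerivAt (fun y : F => ‖y‖) (innerSL ℝ (‖x‖⁻¹ • x)) x := by
  have hsq : HasStrictFDerivAt (fun y : F => √(‖y‖ ^ 2)) _ x :=
    (hasStrictFDerivAt_norm_sq x).sqrt (by positivity)
  simp only [Real.sqrt_sq (norm_nonneg _)] at hsq
  convert hsq using 1
  ext y
  simp only [innerSL_apply_apply, real_inner_smul_left, smul_apply, smul_eq_mul, nsmul_eq_mul,
    Nat.cast_ofNat]
  field_simp

theorem ContinuousLinearMap.map_zero_prodMk (L : E × ℝ →L[ℝ] G) (c : ℝ) :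
    L (0, c) = c • L (0, 1) := by
  rw [← map_smul, Prod.smul_mk, smul_zero, smul_eq_mul, mul_one]

theorem fderiv_comp_prodMk_norm_apply {f : E × ℝ → G} {x : E} {y : F} (hy : y ≠ 0)
    (hf : DifferentiableAt ℝ f (x, ‖y‖)) (u : E) (w : F) :
    fderiv ℝ (fun p : E × F => f (p.1, ‖p.2‖)) (x, y) (u, w)
      = fderiv ℝ f (x, ‖y‖) (u, inner ℝ (‖y‖⁻¹ • y) w) := by
  have hlift : HasFDerivAt (fun p : E × F => (p.1, ‖p.2‖))
      ((ContinuousLinearMap.fst ℝ E F).prod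
        ((innerSL ℝ (‖y‖⁻¹ • y)).comp (ContinuousLinearMap.snd ℝ E F))) (x, y) :=
    hasFDerivAt_fst.prodMk ((hasStrictFDerivAt_norm hy).hasFDerivAt.comp (x, y) hasFDerivAt_snd)
  rw [HasFDerivAt.fderiv (f := fun p : E × F => f (p.1, ‖p.2‖))
    (hf.hasFDerivAt.comp (x, y) hlift)]
  rfl

theorem fderiv_comp_prodMk_norm_smul_apply {f : E × ℝ → G} {x : E} {α : F} (hα : ‖α‖ = 1)
    {t : ℝ} (ht : 0 < t) (hf : DifferentiableAt ℝ f (x, t)) (u : E) (w : F) :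
    fderiv ℝ (fun p : E × F => f (p.1, ‖p.2‖)) (x, t • α) (u, w)
      = fderiv ℝ f (x, t) (u, inner ℝ α w) := by
  have hnorm : ‖t • α‖ = t := by rw [norm_smul, hα, mul_one, Real.norm_of_nonneg ht.le]
  have hne : t • α ≠ 0 := by rw [← norm_ne_zero_iff, hnorm]; exact ht.ne'
  rw [fderiv_comp_prodMk_norm_apply hne (by rwa [hnorm]), hnorm, smul_smul,
    inv_mul_cancel₀ ht.ne', one_smul]

end LiftThroughNorm

open EuclideanSpace in
/-- If for every unit vector α the lifted electromagnetic field tensor, with entries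
T₁₂ = B_z, T₁₃ = −B_y, T₂₃ = B_x, S₁₂ = α_x E_y − α_y E_x, S₁₃ = α_x E_z − α_z E_x,
S₂₃ = α_y E_z − α_z E_y (lifted via t = |T|), satisfies assumption (a4):
(∂T₁₂/∂t_z − ∂S₁₂/∂z) − (∂T₁₃/∂t_y − ∂S₁₃/∂y) + (∂T₂₃/∂t_x − ∂S₂₃/∂x) = 0
at all points with T = tα, t > 0, then the curl Maxwell equation ∇ × E = −∂B/∂t
holds for all X and t > 0. -/
theorem curl_E_eq_neg_dB_dt_of_a4
    (E B : Fin 3 → EuclideanSpace ℝ (Fin 3) × ℝ → ℝ)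
    (hE : ∀ i, ContDiff ℝ 1 (E i)) (hB : ∀ i, ContDiff ℝ 1 (B i))
    (a4 : ∀ α : EuclideanSpace ℝ (Fin 3), ‖α‖ = 1 →
      ∀ (X : EuclideanSpace ℝ (Fin 3)) (t : ℝ), 0 < t →
        (fderiv ℝ (fun p : EuclideanSpace ℝ (Fin 3) × EuclideanSpace ℝ (Fin 3) =>
            B 2 (p.1, ‖p.2‖)) (X, t • α) (0, single 2 1) -
         fderiv ℝ (fun p : EuclideanSpace ℝ (Fin 3) × EuclideanSpace ℝ (Fin 3) =>
            α 0 * E 1 (p.1, ‖p.2‖) - α 1 * E 0 (p.1, ‖p.2‖)) (X, t • α) (single 2 1, 0)) -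
        (fderiv ℝ (fun p : EuclideanSpace ℝ (Fin 3) × EuclideanSpace ℝ (Fin 3) =>
            -B 1 (p.1, ‖p.2‖)) (X, t • α) (0, single 1 1) -
         fderiv ℝ (fun p : EuclideanSpace ℝ (Fin 3) × EuclideanSpace ℝ (Fin 3) =>
            α 0 * E 2 (p.1, ‖p.2‖) - α 2 * E 0 (p.1, ‖p.2‖)) (X, t • α) (single 1 1, 0)) +
        (fderiv ℝ (fun p : EuclideanSpace ℝ (Fin 3) × EuclideanSpace ℝ (Fin 3) =>
            B 0 (p.1, ‖p.2‖)) (X, t • α) (0, single 0 1) -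
         fderiv ℝ (fun p : EuclideanSpace ℝ (Fin 3) × EuclideanSpace ℝ (Fin 3) =>
            α 1 * E 2 (p.1, ‖p.2‖) - α 2 * E 1 (p.1, ‖p.2‖)) (X, t • α) (single 0 1, 0))
          = 0) :
    ∀ (X : EuclideanSpace ℝ (Fin 3)) (t : ℝ), 0 < t →
      (fderiv ℝ (E 2) (X, t) (single 1 1, 0) - fderiv ℝ (E 1) (X, t) (single 2 1, 0)
        = -fderiv ℝ (B 0) (X, t) (0, 1)) ∧
      (fderiv ℝ (E 0) (X, t) (single 2 1, 0) - fderiv ℝ (E 2) (X, t) (single 0 1, 0)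
        = -fderiv ℝ (B 1) (X, t) (0, 1)) ∧
      (fderiv ℝ (E 1) (X, t) (single 0 1, 0) - fderiv ℝ (E 0) (X, t) (single 1 1, 0)
        = -fderiv ℝ (B 2) (X, t) (0, 1)) := by
  intro X t ht
  have hdE (i : Fin 3) : DifferentiableAt ℝ (E i) (X, t) := (hE i).differentiable one_ne_zero _
  have hdB (i : Fin 3) : DifferentiableAt ℝ (B i) (X, t) := (hB i).differentiable one_ne_zero _
  have space_deriv_comb (a b : ℝ) (i j : Fin 3) (v : E3 × ℝ) :
      fderiv ℝ (fun q => a * E i q - b * E j q) (X, t) v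
        = a * fderiv ℝ (E i) (X, t) v - b * fderiv ℝ (E j) (X, t) v := by
    rw [fderiv_fun_sub ((hdE i).const_mul a) ((hdE j).const_mul b), fderiv_const_mul (hdE i),
      fderiv_const_mul (hdE j)]
    rfl
  have a4_eq_inner (α : E3) (hα : ‖α‖ = 1) :
      α 0 * (fderiv ℝ (E 2) (X, t) (single 1 1, 0) - fderiv ℝ (E 1) (X, t) (single 2 1, 0)
          + fderiv ℝ (B 0) (X, t) (0, 1)) +
      α 1 * (fderiv ℝ (E 0) (X, t) (single 2 1, 0) - fderiv ℝ (E 2) (X, t) (single 0 1, 0)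
          + fderiv ℝ (B 1) (X, t) (0, 1)) +
      α 2 * (fderiv ℝ (E 1) (X, t) (single 0 1, 0) - fderiv ℝ (E 0) (X, t) (single 1 1, 0)
          + fderiv ℝ (B 2) (X, t) (0, 1)) = 0 := by
    have h := a4 α hα X t ht
    have lift (f : E3 × ℝ → ℝ) (hf : DifferentiableAt ℝ f (X, t)) :=
      fderiv_comp_prodMk_norm_smul_apply hα ht hf
    rw [lift (B 2) (hdB 2), lift (fun q => α 0 * E 1 q - α 1 * E 0 q) (by fun_prop),
      lift (fun q => -B 1 q) (by fun_prop), lift (fun q => α 0 * E 2 q - α 2 * E 0 q) (by fun_prop),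
      lift (B 0) (hdB 0), lift (fun q => α 1 * E 2 q - α 2 * E 1 q) (by fun_prop)] at h
    simp only [space_deriv_comb, fderiv_fun_neg, neg_apply, inner_single_right,
      inner_zero_right, conj_trivial, one_mul] at h
    rw [(fderiv ℝ (B 0) (X, t)).map_zero_prodMk, (fderiv ℝ (B 1) (X, t)).map_zero_prodMk,
      (fderiv ℝ (B 2) (X, t)).map_zero_prodMk] at h
    linear_combination h
  have unit (i : Fin 3) : ‖(single i 1 : E3)‖ = 1 := by simp
  refine ⟨?_, ?_, ?_⟩
  · simpa [add_eq_zero_iff_eq_neg] using a4_eq_inner _ (unit 0)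
  · simpa [add_eq_zero_iff_eq_neg] using a4_eq_inner _ (unit 1)
  · simpa [add_eq_zero_iff_eq_neg] using a4_eq_inner _ (unit 2)
end
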